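/- arXiv:1804.08189 — 3 statements merged into one kernel-verified Lean document; each statement's English description precedes it below -/
import Mathlib

section
/- Let V_m be the span of {q_{a,b} : a+b = m, 0 ≤ a ≤ b} inside C[α_a : a ≥ 0] where q_{a,b} = α_a α_b, and let ∂ be the derivation with ∂α_a = α_{a+1}. Then ∂(V_m) ⊆ V_{m+1}, dim(V_{2m}/∂(V_{2m-1})) = 1, and dim(V_{2m+1}/∂(V_{2m})) = 0 for all m ≥ 1. -/
open MvPolynomial

/-- V_m ⊆ ℂ[α_a : a ≥ 0] is the span of q_{a,b} = α_a α_b with a ≤ b, a + b = m. -/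
noncomputable def Vspan (m : ℕ) : Submodule ℂ (MvPolynomial ℕ ℂ) :=
  Submodule.span ℂ {x | ∃ a b : ℕ, a ≤ b ∧ a + b = m ∧ x = X a * X b}

/-!
Leibniz gives `∂ q_{a,b} = q_{a+1,b} + q_{a,b+1}`. In odd degree `q_{m,m+1} = ½ ∂ q_{m,m}`, and
the relations `q_{a,b+1} = ∂ q_{a,b} - q_{a+1,b}` reach every `q_{a,b}` with `a + b = 2m + 1`
from the middle outwards, so `∂ V_{2m} = V_{2m+1}`. In even degree the same relations give
`q_{a,b} ≡ (-1)^a q_{0,2m}` modulo `∂ V_{2m-1}`, so the quotient is spanned by `q_{0,2m}`; it is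
nonzero because the evaluation `α_n ↦ 1` (`n` even), `α_n ↦ i` (`n` odd) sends `q_{a,b}` to
`(-1)^a` on `V_{2m}` and hence vanishes on `∂ V_{2m-1}`.
-/

section QuotientRank

variable {K M : Type*} [Field K] [AddCommGroup M] [Module K M]

theorem finrank_quotient_comap_subtype_eq_one {W N : Submodule K M} {v : M} (hv : v ∈ W)
    (hvN : v ∉ N) (hW : W ≤ N ⊔ K ∙ v) :
    Module.finrank K (W ⧸ N.comap W.subtype) = 1 := by
  refine finrank_eq_one (Submodule.Quotient.mk ⟨v, hv⟩) ?_ ?_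
  · rwa [ne_eq, Submodule.Quotient.mk_eq_zero]
  · intro w
    obtain ⟨⟨w, hw⟩, rfl⟩ := Submodule.Quotient.mk_surjective _ w
    obtain ⟨y, hy, z, hz, rfl⟩ := Submodule.mem_sup.mp (hW hw)
    obtain ⟨c, rfl⟩ := Submodule.mem_span_singleton.mp hz
    refine ⟨c, ?_⟩
    rw [← Submodule.Quotient.mk_smul, Submodule.Quotient.eq]
    simpa using neg_mem hy

end QuotientRank

theorem X_mul_X_mem_Vspan {a b m : ℕ} (h : a + b = m) :
    (X a * X b : MvPolynomial ℕ ℂ) ∈ Vspan m := by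
  rcases le_total a b with hab | hab
  · exact Submodule.subset_span ⟨a, b, hab, h, rfl⟩
  · exact Submodule.subset_span ⟨b, a, hab, by omega, mul_comm (X a) (X b)⟩

theorem Vspan_le {m : ℕ} {p : Submodule ℂ (MvPolynomial ℕ ℂ)}
    (h : ∀ a b : ℕ, a ≤ b → a + b = m → X a * X b ∈ p) : Vspan m ≤ p := by
  rw [Vspan, Submodule.span_le]
  rintro _ ⟨a, b, hle, hab, rfl⟩
  exact h a b hle hab

noncomputable def altEval : MvPolynomial ℕ ℂ →ₐ[ℂ] ℂ :=
  aeval fun n => if Even n then 1 else Complex.I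

theorem altEval_X_mul_X {a b : ℕ} (h : Even (a + b)) : altEval (X a * X b) = (-1) ^ a := by
  have hab : Even a ↔ Even b := Nat.even_add.mp h
  simp only [altEval, map_mul, aeval_X]
  by_cases ha : Even a
  · simp [ha, hab.mp ha, ha.neg_one_pow]
  · simp [ha, mt hab.mpr ha, (Nat.not_even_iff_odd.mp ha).neg_one_pow]

section Derivation

variable {D : Derivation ℂ (MvPolynomial ℕ ℂ) (MvPolynomial ℕ ℂ)}
  (hD : ∀ a : ℕ, D (X a) = X (a + 1))
include hD

theorem derivation_X_mul_X (a b : ℕ) : D (X a * X b) = X (a + 1) * X b + X a * X (b + 1) := by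
  rw [Derivation.leibniz, hD, hD, smul_eq_mul, smul_eq_mul]
  ring

theorem Vspan_le_comap (m : ℕ) : Vspan m ≤ (Vspan (m + 1)).comap D.toLinearMap :=
  Vspan_le fun a b _ hab => by
    rw [Submodule.mem_comap, Derivation.coeFn_coe, derivation_X_mul_X hD]
    exact add_mem (X_mul_X_mem_Vspan (by omega)) (X_mul_X_mem_Vspan (by omega))

theorem Vspan_odd_le_map (m : ℕ) : Vspan (2 * m + 1) ≤ (Vspan (2 * m)).map D.toLinearMap := by
  have D_mem_map {a b : ℕ} (h : a + b = 2 * m) :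
      D (X a * X b) ∈ (Vspan (2 * m)).map D.toLinearMap :=
    Submodule.mem_map_of_mem (X_mul_X_mem_Vspan h)
  have outward (d : ℕ) :
      ∀ a, a + d = m → X a * X (a + 2 * d + 1) ∈ (Vspan (2 * m)).map D.toLinearMap := by
    induction d with
    | zero =>
      intro a ha
      have h := Submodule.smul_mem _ (2⁻¹ : ℂ) (D_mem_map (a := a) (b := a) (by omega))
      rwa [derivation_X_mul_X hD, mul_comm (X (a + 1)), ← two_smul ℂ, smul_smul,
        inv_mul_cancel₀ two_ne_zero, one_smul] at h
    | succ d ih =>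
      intro a ha
      have h := sub_mem (D_mem_map (a := a) (b := a + 2 * d + 2) (by omega))
        (ih (a + 1) (by omega))
      rw [derivation_X_mul_X hD] at h
      convert h using 1
      ring_nf
  refine Vspan_le fun a b hle hab => ?_
  obtain ⟨d, rfl⟩ : ∃ d, b = a + 2 * d + 1 := ⟨(b - a) / 2, by omega⟩
  exact outward d a (by omega)

theorem X_mul_X_sub_mem_map (n : ℕ) : ∀ a b : ℕ, a + b = n + 1 →
    X a * X b - (-1 : ℂ) ^ a • (X 0 * X (n + 1)) ∈ (Vspan n).map D.toLinearMap := by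
  intro a
  induction a with
  | zero =>
    intro b hb
    simp [show b = n + 1 by omega]
  | succ a ih =>
    intro b hb
    have hDab : D (X a * X b) ∈ (Vspan n).map D.toLinearMap :=
      Submodule.mem_map_of_mem (X_mul_X_mem_Vspan (by omega))
    have h := sub_mem hDab (ih (b + 1) (by omega))
    rw [derivation_X_mul_X hD] at h
    convert h using 1
    rw [pow_succ]
    module

theorem altEval_eq_zero_of_mem_map {n : ℕ} (hn : Even (n + 1)) {y : MvPolynomial ℕ ℂ}
    (hy : y ∈ (Vspan n).map D.toLinearMap) : altEval y = 0 := by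
  suffices Vspan n ≤ LinearMap.ker (altEval.toLinearMap ∘ₗ D.toLinearMap) by
    obtain ⟨z, hz, rfl⟩ := hy
    exact this hz
  refine Vspan_le fun a b _ hab => ?_
  simp only [LinearMap.mem_ker, LinearMap.comp_apply, AlgHom.toLinearMap_apply,
    Derivation.coeFn_coe]
  rw [derivation_X_mul_X hD, map_add, altEval_X_mul_X (by rwa [add_right_comm, hab]),
    altEval_X_mul_X (by rwa [← add_assoc, hab]), pow_succ]
  ring

theorem finrank_Vspan_succ_quotient_map_eq_one {n : ℕ} (hn : Even (n + 1)) :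
    Module.finrank ℂ (Vspan (n + 1) ⧸
      ((Vspan n).map D.toLinearMap).comap (Vspan (n + 1)).subtype) = 1 := by
  have hq : X 0 * X (n + 1) ∉ (Vspan n).map D.toLinearMap := fun h => by
    simpa [altEval_X_mul_X (a := 0) (by simpa using hn)] using altEval_eq_zero_of_mem_map hD hn h
  refine finrank_quotient_comap_subtype_eq_one (X_mul_X_mem_Vspan (zero_add _)) hq ?_
  refine Vspan_le fun a b _ hab => Submodule.mem_sup.mpr ⟨_, X_mul_X_sub_mem_map hD n a b hab, _,
    Submodule.smul_mem _ _ (Submodule.mem_span_singleton_self _), sub_add_cancel _ _⟩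

end Derivation

/-- ∂(V_m) ⊆ V_{m+1}; dim(V_{2m}/∂(V_{2m-1})) = 1 and dim(V_{2m+1}/∂(V_{2m})) = 0
for all m ≥ 1. -/
theorem stmt_4 (D : Derivation ℂ (MvPolynomial ℕ ℂ) (MvPolynomial ℕ ℂ))
    (hD : ∀ a : ℕ, D (X a) = X (a + 1)) :
    (∀ m : ℕ, ∀ x ∈ Vspan m, D x ∈ Vspan (m + 1)) ∧
    (∀ m : ℕ, 1 ≤ m →
      Module.finrank ℂ
        (↥(Vspan (2 * m)) ⧸
          Submodule.comap (Vspan (2 * m)).subtype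
            (Submodule.map D.toLinearMap (Vspan (2 * m - 1)))) = 1 ∧
      Module.finrank ℂ
        (↥(Vspan (2 * m + 1)) ⧸
          Submodule.comap (Vspan (2 * m + 1)).subtype
            (Submodule.map D.toLinearMap (Vspan (2 * m)))) = 0) := by
  refine ⟨fun m x hx => Vspan_le_comap hD m hx, fun m hm => ⟨?_, ?_⟩⟩
  · have h := finrank_Vspan_succ_quotient_map_eq_one hD (n := 2 * m - 1) ⟨m, by omega⟩
    rwa [show 2 * m - 1 + 1 = 2 * m by omega] at h
  · rw [Submodule.comap_subtype_eq_top.mpr (Vspan_odd_le_map hD m)]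
    exact Module.finrank_zero_of_subsingleton
end

section
/- With V_m as above (span of q_{a,b} = α_a α_b with a+b = m) and derivation ∂(α_a) = α_{a+1}, the set {∂^{2k} q_{0,2m-2k} : 0 ≤ k ≤ m} is a basis of V_{2m}, and {∂^{2k+1} q_{0,2m-2k} : 0 ≤ k ≤ m} is a basis of V_{2m+1}. -/
/-!
The linear map `pairSymbol : ℂ[α] → ℂ[t]`, sending `α_a α_b` to `t^a + t^b`, turns `∂` into
multiplication by `t + 1` on quadratic forms, so it sends `∂^n q_{0,r}` to `(t + 1)^n (t^r + 1)`.
For `n = 2k + c` and `r = 2m - 2k` even, `t^r + 1` does not vanish at `t = -1`, so these images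
vanish at `-1` to the pairwise distinct orders `2k + c` and are linearly independent. As
`∂^n q_{0,r} ∈ V_{r+n}` and `dim V_{2m+c} ≤ m + 1` for `c ≤ 1`, the `m + 1` independent vectors
span `V_{2m+c}`.
-/

open MvPolynomial

theorem linearIndependent_of_pow_dvd_of_not_pow_succ_dvd {K A ι : Type*} [Field K] [CommRing A]
    [Algebra K A] {v : ι → A} (p : A) (e : ι → ℕ) (he : Function.Injective e)
    (hdvd : ∀ i, p ^ e i ∣ v i) (hndvd : ∀ i, ¬ p ^ (e i + 1) ∣ v i) :
    LinearIndependent K v := by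
  classical
  rw [linearIndependent_iff']
  intro s g hsum i hi
  by_contra hgi
  obtain ⟨j, hj, hmin⟩ := (s.filter (g · ≠ 0)).exists_min_image e ⟨i, by simp [hi, hgi]⟩
  rw [Finset.mem_filter] at hj
  have hrest : p ^ (e j + 1) ∣ ∑ k ∈ s.erase j, g k • v k := by
    refine Finset.dvd_sum fun k hk => ?_
    obtain ⟨hkj, hks⟩ := Finset.mem_erase.mp hk
    by_cases hgk : g k = 0
    · simp [hgk]
    have hlt : e j < e k := (hmin k (by simp [hks, hgk])).lt_of_ne (he.ne hkj.symm)
    rw [Algebra.smul_def]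
    exact Dvd.dvd.mul_left ((pow_dvd_pow p hlt).trans (hdvd k)) _
  have hj_term : p ^ (e j + 1) ∣ g j • v j := by
    rw [← s.add_sum_erase _ hj.1] at hsum
    rw [eq_neg_of_add_eq_zero_left hsum]
    exact hrest.neg_right
  apply hndvd j
  rw [← inv_smul_smul₀ hj.2 (v j), Algebra.smul_def]
  exact hj_term.mul_left _

namespace Polynomial

theorem not_X_add_one_dvd_X_pow_add_one {K : Type*} [Field K] [NeZero (2 : K)] {n : ℕ}
    (hn : Even n) : ¬ (X + 1 : K[X]) ∣ X ^ n + 1 := by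
  rw [← sub_neg_eq_add X, ← C_1, ← C_neg, dvd_iff_isRoot, IsRoot, eval_add, eval_pow, eval_X,
    eval_C, hn.neg_one_pow, one_add_one_eq_two]
  exact two_ne_zero

theorem linearIndependent_X_add_one_pow_mul_X_pow_add_one {K : Type*} [Field K] [NeZero (2 : K)]
    (m c : ℕ) :
    LinearIndependent K
      (fun k : Fin (m + 1) => (X + 1) ^ (2 * (k : ℕ) + c) * (X ^ (2 * m - 2 * k) + 1) :
        Fin (m + 1) → K[X]) := by
  refine linearIndependent_of_pow_dvd_of_not_pow_succ_dvd (X + 1) (fun k => 2 * (k : ℕ) + c)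
    (fun k l hkl => Fin.ext (by simpa using hkl)) (fun k => dvd_mul_right _ _) fun k => ?_
  rw [pow_succ, mul_dvd_mul_iff_left (pow_ne_zero _ (by simpa using X_add_C_ne_zero (1 : K)))]
  exact not_X_add_one_dvd_X_pow_add_one ⟨m - k, by omega⟩

end Polynomial

-- On `X a * X b` this is `(t^a + 1) (t^b + 1) - 1 - t^a t^b = t^a + t^b`.
noncomputable def pairSymbol (R : Type*) [CommRing R] : MvPolynomial ℕ R →ₗ[R] Polynomial R :=
  (aeval fun a => Polynomial.X ^ a + 1).toLinearMap
    - (aeval fun _ => (1 : Polynomial R)).toLinearMap - (aeval fun a => Polynomial.X ^ a).toLinearMap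

theorem pairSymbol_X_mul_X {R : Type*} [CommRing R] (a b : ℕ) :
    pairSymbol R (X a * X b) = Polynomial.X ^ a + Polynomial.X ^ b := by
  simp only [pairSymbol, LinearMap.sub_apply, AlgHom.toLinearMap_apply, map_mul, aeval_X]
  ring

section IteratedDerivation

variable {R : Type*} [CommRing R] {D : Derivation R (MvPolynomial ℕ R) (MvPolynomial ℕ R)}

theorem pow_derivation_X_mul_X_succ (hD : ∀ a, D (X a) = X (a + 1)) (n a b : ℕ) :
    (D.toLinearMap ^ (n + 1)) (X a * X b)
      = (D.toLinearMap ^ n) (X (a + 1) * X b) + (D.toLinearMap ^ n) (X a * X (b + 1)) := by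
  have hstep : D (X a * X b) = X (a + 1) * X b + X a * X (b + 1) := by
    rw [D.leibniz, hD, hD, smul_eq_mul, smul_eq_mul]
    ring
  rw [pow_succ, Module.End.mul_apply, Derivation.coeFn_coe, hstep, map_add]

theorem pairSymbol_pow_derivation_X_mul_X (hD : ∀ a, D (X a) = X (a + 1)) (n a b : ℕ) :
    pairSymbol R ((D.toLinearMap ^ n) (X a * X b))
      = (Polynomial.X + 1) ^ n * (Polynomial.X ^ a + Polynomial.X ^ b) := by
  induction n generalizing a b with
  | zero => simp [pairSymbol_X_mul_X]
  | succ n ih =>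
    rw [pow_derivation_X_mul_X_succ hD, map_add, ih, ih]
    ring

end IteratedDerivation

theorem linearIndependent_pow_derivation_X_zero_mul_X {K : Type*} [Field K] [NeZero (2 : K)]
    {D : Derivation K (MvPolynomial ℕ K) (MvPolynomial ℕ K)} (hD : ∀ a, D (X a) = X (a + 1))
    (m c : ℕ) :
    LinearIndependent K
      (fun k : Fin (m + 1) => (D.toLinearMap ^ (2 * (k : ℕ) + c)) (X 0 * X (2 * m - 2 * k))) := by
  refine .of_comp (pairSymbol K) ?_
  convert Polynomial.linearIndependent_X_add_one_pow_mul_X_pow_add_one (K := K) m c using 1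
  ext k : 1
  rw [Function.comp_apply, pairSymbol_pow_derivation_X_mul_X hD, pow_zero, add_comm (_ ^ _)]

theorem X_mul_X_mem_vspan (a b : ℕ) : X a * X b ∈ Vspan (a + b) := by
  apply Submodule.subset_span
  rcases le_total a b with hab | hba
  · exact ⟨a, b, hab, rfl, rfl⟩
  · exact ⟨b, a, hba, add_comm b a, mul_comm _ _⟩

theorem pow_derivation_X_mul_X_mem_vspan {D : Derivation ℂ (MvPolynomial ℕ ℂ) (MvPolynomial ℕ ℂ)}
    (hD : ∀ a, D (X a) = X (a + 1)) (n a b : ℕ) :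
    (D.toLinearMap ^ n) (X a * X b) ∈ Vspan (a + b + n) := by
  induction n generalizing a b with
  | zero => exact X_mul_X_mem_vspan a b
  | succ n ih =>
    rw [pow_derivation_X_mul_X_succ hD]
    exact add_mem (by convert ih (a + 1) b using 2; omega) (by convert ih a (b + 1) using 2; omega)

noncomputable def quadraticMonomials (M : ℕ) : Finset (MvPolynomial ℕ ℂ) :=
  (Finset.range (M / 2 + 1)).image fun a => X a * X (M - a)

theorem vspan_le_span_quadraticMonomials (M : ℕ) :
    Vspan M ≤ Submodule.span ℂ (quadraticMonomials M) := by
  refine Submodule.span_le.mpr ?_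
  rintro _ ⟨a, b, hab, rfl, rfl⟩
  refine Submodule.subset_span (Finset.mem_image.mpr ⟨a, Finset.mem_range.mpr (by omega), ?_⟩)
  rw [Nat.add_sub_cancel_left]

instance (M : ℕ) : FiniteDimensional ℂ (Vspan M) :=
  Submodule.finiteDimensional_of_le (vspan_le_span_quadraticMonomials M)

theorem finrank_vspan_le (M : ℕ) : Module.finrank ℂ (Vspan M) ≤ M / 2 + 1 :=
  calc Module.finrank ℂ (Vspan M)
    _ ≤ Set.finrank ℂ (quadraticMonomials M : Set (MvPolynomial ℕ ℂ)) :=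
      Submodule.finrank_mono (vspan_le_span_quadraticMonomials M)
    _ ≤ (quadraticMonomials M).card := finrank_span_finset_le_card _
    _ ≤ M / 2 + 1 := Finset.card_image_le.trans_eq (Finset.card_range _)

theorem span_pow_derivation_X_zero_mul_X_eq_vspan
    {D : Derivation ℂ (MvPolynomial ℕ ℂ) (MvPolynomial ℕ ℂ)} (hD : ∀ a, D (X a) = X (a + 1))
    (m c : ℕ) (hc : c ≤ 1) :
    Submodule.span ℂ (Set.range fun k : Fin (m + 1) =>
      (D.toLinearMap ^ (2 * (k : ℕ) + c)) (X 0 * X (2 * m - 2 * k))) = Vspan (2 * m + c) := by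
  refine Submodule.eq_of_le_of_finrank_le ?_ ?_
  · refine Submodule.span_le.mpr ?_
    rintro _ ⟨k, rfl⟩
    have hmem := pow_derivation_X_mul_X_mem_vspan hD (2 * k + c) 0 (2 * m - 2 * k)
    rwa [show 0 + (2 * m - 2 * k) + (2 * k + c) = 2 * m + c by omega] at hmem
  · rw [finrank_span_eq_card (linearIndependent_pow_derivation_X_zero_mul_X hD m c),
      Fintype.card_fin]
    exact (finrank_vspan_le _).trans_eq (by omega)

/-- {∂^{2k} q_{0,2m-2k} : 0 ≤ k ≤ m} is a basis of V_{2m}, and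
{∂^{2k+1} q_{0,2m-2k} : 0 ≤ k ≤ m} is a basis of V_{2m+1}. -/
theorem stmt_5 (D : Derivation ℂ (MvPolynomial ℕ ℂ) (MvPolynomial ℕ ℂ))
    (hD : ∀ a : ℕ, D (X a) = X (a + 1)) (m : ℕ) :
    (LinearIndependent ℂ
        (fun k : Fin (m + 1) => (D.toLinearMap ^ (2 * (k : ℕ))) (X 0 * X (2 * m - 2 * k))) ∧
      Submodule.span ℂ
        (Set.range (fun k : Fin (m + 1) =>
          (D.toLinearMap ^ (2 * (k : ℕ))) (X 0 * X (2 * m - 2 * k)))) = Vspan (2 * m)) ∧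
    (LinearIndependent ℂ
        (fun k : Fin (m + 1) => (D.toLinearMap ^ (2 * (k : ℕ) + 1)) (X 0 * X (2 * m - 2 * k))) ∧
      Submodule.span ℂ
        (Set.range (fun k : Fin (m + 1) =>
          (D.toLinearMap ^ (2 * (k : ℕ) + 1)) (X 0 * X (2 * m - 2 * k)))) = Vspan (2 * m + 1)) :=
  ⟨⟨linearIndependent_pow_derivation_X_zero_mul_X hD m 0,
      span_pow_derivation_X_zero_mul_X_eq_vspan hD m 0 zero_le_one⟩,
    ⟨linearIndependent_pow_derivation_X_zero_mul_X hD m 1,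
      span_pow_derivation_X_zero_mul_X_eq_vspan hD m 1 le_rfl⟩⟩
end

section
/- Let R = C[α_a^i : a ≥ 0, 1 ≤ i ≤ n] with derivation ∂(α_a^i) = α_{a+1}^i, and θ the automorphism negating all variables. Then R^θ is generated as a ∂-ring (i.e., as a C-algebra closed under ∂, generated together with all derivatives) by the set {q^{i,i}_{0,2m} : m ≥ 0, 1 ≤ i ≤ n} ∪ {q^{i,j}_{0,m} : m ≥ 0, 1 ≤ i < j ≤ n}, where q^{i,j}_{a,b} = α_a^i α_b^j. -/
/-!
The involution `θ` multiplies a monomial by `(-1) ^ degree`, so `R^θ` is spanned by the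
monomials of even degree and is therefore generated as an algebra by the quadratic monomials
`q^{i,j}_{a,b} = α_a^i α_b^j`; and `θ` commutes with `∂` because it does so on the variables.
It remains to produce every `q^{i,j}_{a,b}` from `S` by means of
`∂ q^{i,j}_{a,b} = q^{i,j}_{a+1,b} + q^{i,j}_{a,b+1}`: once all `q^{i,j}_{a,b}` with `a + b = N`
are available, this identity gives all of them with `a + b = N + 1` from any single one.
For `i < j` that one is `q^{i,j}_{0,N+1} ∈ S`; for `i = j` it is `q^{i,i}_{0,N+1} ∈ S` when
`N + 1` is even, and `q^{i,i}_{k,k+1} = ∂ q^{i,i}_{k,k} / 2` when `N + 1 = 2k + 1`.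
-/

open MvPolynomial

theorem Submonoid.multiset_prod_map_mem_of_even_card {M α : Type*} [CommMonoid M]
    (P : Submonoid M) (f : α → M) (hf : ∀ u v, f u * f v ∈ P) (m : Multiset α)
    (hm : Even (Multiset.card m)) : (m.map f).prod ∈ P := by
  suffices (Even (Multiset.card m) → (m.map f).prod ∈ P) ∧
      (Odd (Multiset.card m) → ∀ u, f u * (m.map f).prod ∈ P) from this.1 hm
  clear hm
  induction m using Multiset.induction_on with
  | empty => simp [P.one_mem]
  | cons a m ih =>
    simp only [Multiset.card_cons, Nat.even_add_one, Nat.odd_add_one, Nat.not_even_iff_odd,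
      Nat.not_odd_iff_even, Multiset.map_cons, Multiset.prod_cons]
    refine ⟨fun hodd => ih.2 hodd a, fun heven u => ?_⟩
    rw [← mul_assoc]
    exact P.mul_mem (hf u a) (ih.1 heven)

namespace MvPolynomial

variable {R σ : Type*} [CommRing R]

theorem algHom_derivation_comm (f : MvPolynomial σ R →ₐ[R] MvPolynomial σ R)
    (D : Derivation R (MvPolynomial σ R) (MvPolynomial σ R))
    (h : ∀ v, f (D (X v)) = D (f (X v))) (p : MvPolynomial σ R) : f (D p) = D (f p) := by
  induction p using MvPolynomial.induction_on with
  | C a => simp [← algebraMap_eq]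
  | add p q hp hq => simp only [map_add, hp, hq]
  | mul_X p v hp => simp only [Derivation.leibniz, map_add, map_mul, smul_eq_mul, h, hp]

theorem monomial_eq_prod_toMultiset (s : σ →₀ ℕ) :
    monomial s (1 : R) = (s.toMultiset.map X).prod := by
  rw [Finsupp.toMultiset_map, Finsupp.prod_toMultiset,
    Finsupp.prod_mapDomain_index pow_zero pow_add, monomial_eq, C_1, one_mul]

theorem map_monomial_of_map_X_eq_neg (θ : MvPolynomial σ R →ₐ[R] MvPolynomial σ R)
    (hθ : ∀ v, θ (X v) = -X v) (s : σ →₀ ℕ) (c : R) :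
    θ (monomial s c) = monomial s ((-1) ^ s.degree * c) := by
  have : θ = aeval fun v => -X v := algHom_ext fun v => by rw [hθ, aeval_X]
  rw [this, aeval_monomial]
  have hsign : (s.prod fun v k => (-X v) ^ k) =
      (-1) ^ s.degree * s.prod fun v k => (X v : MvPolynomial σ R) ^ k := by
    simp only [neg_pow (X _ : MvPolynomial σ R), Finsupp.prod_mul]
    rw [Finsupp.prod, Finset.prod_pow_eq_pow_sum, ← Finsupp.degree_apply]
  rw [hsign, monomial_eq, algebraMap_eq, C_mul, C_pow, C_neg, C_1]
  ring

theorem coeff_map_of_map_X_eq_neg (θ : MvPolynomial σ R →ₐ[R] MvPolynomial σ R)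
    (hθ : ∀ v, θ (X v) = -X v) (s : σ →₀ ℕ) (p : MvPolynomial σ R) :
    coeff s (θ p) = (-1) ^ s.degree * coeff s p := by
  induction p using MvPolynomial.induction_on' with
  | monomial t c =>
    classical
    rw [map_monomial_of_map_X_eq_neg θ hθ, coeff_monomial, coeff_monomial]
    split_ifs with hts
    · rw [hts]
    · rw [mul_zero]
  | add p q hp hq => rw [map_add, coeff_add, coeff_add, hp, hq, mul_add]

theorem mem_of_map_eq_self_of_map_X_eq_neg {K : Type*} [Field K] [NeZero (2 : K)]
    (θ : MvPolynomial σ K →ₐ[K] MvPolynomial σ K)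
    (hθ : ∀ v, θ (X v) = -X v) (A : Subalgebra K (MvPolynomial σ K))
    (hA : ∀ u v, X u * X v ∈ A) {p : MvPolynomial σ K} (hp : θ p = p) : p ∈ A := by
  have neg_one_ne_one : (-1 : K) ≠ 1 := fun h =>
    two_ne_zero (one_add_one_eq_two (R := K) ▸ neg_eq_iff_add_eq_zero.mp h)
  rw [as_sum p]
  refine A.sum_mem fun s hs => ?_
  have hdeg : Even s.degree := by
    have hcoeff := coeff_map_of_map_X_eq_neg θ hθ s p
    rw [hp, eq_comm, mul_eq_right₀ (mem_support_iff.mp hs)] at hcoeff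
    exact (neg_one_pow_eq_one_iff_even neg_one_ne_one).mp hcoeff
  rw [← mul_one (coeff s p), ← smul_eq_mul, ← smul_monomial, monomial_eq_prod_toMultiset]
  refine A.smul_mem (A.toSubmonoid.multiset_prod_map_mem_of_even_card X hA _ ?_) _
  rwa [Finsupp.card_toMultiset]

section

variable {ι : Type*} (D : Derivation R (MvPolynomial (ℕ × ι) R) (MvPolynomial (ℕ × ι) R))
  (hD : ∀ a i, D (X (a, i)) = X (a + 1, i))
include hD

theorem derivation_X_mul_X (a b : ℕ) (i j : ι) :
    D (X (a, i) * X (b, j)) = X (a + 1, i) * X (b, j) + X (a, i) * X (b + 1, j) := by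
  rw [Derivation.leibniz, hD, hD, smul_eq_mul, smul_eq_mul, add_comm]
  ring

variable {A : Subalgebra R (MvPolynomial (ℕ × ι) R)} (hA : ∀ p ∈ A, D p ∈ A)
include hA

theorem X_mul_X_succ_mem_iff {a b : ℕ} {i j : ι} (h : X (a, i) * X (b, j) ∈ A) :
    X (a, i) * X (b + 1, j) ∈ A ↔ X (a + 1, i) * X (b, j) ∈ A := by
  have hsum := hA _ h
  rw [derivation_X_mul_X D hD] at hsum
  exact ⟨fun h' => (add_mem_cancel_right h').mp hsum,
    fun h' => (add_mem_cancel_left h').mp hsum⟩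

theorem X_mul_X_mem_of_forall_X_zero_mul_X_mem {i j : ι} (h0 : ∀ m, X (0, i) * X (m, j) ∈ A)
    (a b : ℕ) : X (a, i) * X (b, j) ∈ A := by
  induction a generalizing b with
  | zero => exact h0 b
  | succ a ih => exact (X_mul_X_succ_mem_iff D hD hA (ih b)).mp (ih (b + 1))

theorem X_mul_X_mem_iff_of_forall_add_eq {i j : ι} {N : ℕ}
    (hN : ∀ a b, a + b = N → X (a, i) * X (b, j) ∈ A) {a b : ℕ} (hab : a + b = N + 1) :
    X (a, i) * X (b, j) ∈ A ↔ X (0, i) * X (N + 1, j) ∈ A := by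
  induction a generalizing b with
  | zero => rw [zero_add] at hab; rw [hab]
  | succ a ih =>
    rw [← X_mul_X_succ_mem_iff D hD hA (hN a b (by omega))]
    exact ih (by omega)

theorem X_mul_X_self_mem [Invertible (2 : R)] {i : ι} (h0 : ∀ m, X (0, i) * X (2 * m, i) ∈ A)
    (a b : ℕ) : X (a, i) * X (b, i) ∈ A := by
  suffices ∀ N a b, a + b = N → X (a, i) * X (b, i) ∈ A from this _ a b rfl
  intro N
  induction N with
  | zero =>
    intro a b hab
    obtain ⟨rfl, rfl⟩ : a = 0 ∧ b = 0 := by omega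
    exact h0 0
  | succ N ih =>
    intro a b hab
    refine (X_mul_X_mem_iff_of_forall_add_eq D hD hA ih hab).mpr ?_
    rcases Nat.even_or_odd (N + 1) with ⟨m, hm⟩ | ⟨k, hk⟩
    · rw [hm, ← two_mul]
      exact h0 m
    · have hsq := hA _ (ih k k (by omega))
      rw [derivation_X_mul_X D hD, mul_comm (X (k + 1, i)), ← two_smul R] at hsq
      have hk' : X (k, i) * X (k + 1, i) ∈ A := by
        simpa [smul_smul] using A.smul_mem hsq (⅟2 : R)
      exact (X_mul_X_mem_iff_of_forall_add_eq D hD hA ih (by omega)).mp hk'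

theorem X_mul_X_mem [Invertible (2 : R)] [LinearOrder ι]
    (hdiag : ∀ m i, X (0, i) * X (2 * m, i) ∈ A)
    (hoff : ∀ m i j, i < j → X (0, i) * X (m, j) ∈ A) :
    ∀ u v : ℕ × ι, X u * X v ∈ A := by
  rintro ⟨a, i⟩ ⟨b, j⟩
  rcases lt_trichotomy i j with hij | rfl | hji
  · exact X_mul_X_mem_of_forall_X_zero_mul_X_mem D hD hA (hoff · i j hij) a b
  · exact X_mul_X_self_mem D hD hA (hdiag · i) a b
  · rw [mul_comm]
    exact X_mul_X_mem_of_forall_X_zero_mul_X_mem D hD hA (hoff · j i hji) b a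

end

end MvPolynomial

/-- The fixed subalgebra R^θ of R = ℂ[α_a^i] under negation of all variables is
generated as a ∂-ring by {q^{i,i}_{0,2m}} ∪ {q^{i,j}_{0,m} : i < j}: it contains this
set, is closed under ∂, and is contained in every ∂-closed subalgebra containing the set. -/
theorem stmt_16 (n : ℕ)
    (D : Derivation ℂ (MvPolynomial (ℕ × Fin n) ℂ) (MvPolynomial (ℕ × Fin n) ℂ))
    (hD : ∀ (a : ℕ) (i : Fin n), D (X (a, i)) = X (a + 1, i))
    (θ : MvPolynomial (ℕ × Fin n) ℂ ≃ₐ[ℂ] MvPolynomial (ℕ × Fin n) ℂ)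
    (hθ : ∀ v : ℕ × Fin n, θ (X v) = - X v)
    (S : Set (MvPolynomial (ℕ × Fin n) ℂ))
    (hS : S = {x | (∃ (m : ℕ) (i : Fin n), x = X (0, i) * X (2 * m, i)) ∨
      (∃ (m : ℕ) (i j : Fin n), i < j ∧ x = X (0, i) * X (m, j))}) :
    (∀ x ∈ S, θ x = x) ∧
    (∀ x : MvPolynomial (ℕ × Fin n) ℂ, θ x = x → D x ∈ {y | θ y = y}) ∧
    (∀ A : Subalgebra ℂ (MvPolynomial (ℕ × Fin n) ℂ),
      S ⊆ A → (∀ x ∈ A, D x ∈ A) →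
      ∀ x : MvPolynomial (ℕ × Fin n) ℂ, θ x = x → x ∈ A) := by
  subst hS
  have hθD : ∀ p, θ (D p) = D (θ p) :=
    algHom_derivation_comm (θ : _ →ₐ[ℂ] _) D fun ⟨a, i⟩ => by simp [hD, hθ]
  refine ⟨?_, fun x hx => ?_, fun A hSA hA x hx => ?_⟩
  · rintro x (⟨m, i, rfl⟩ | ⟨m, i, j, -, rfl⟩) <;> simp [hθ]
  · show θ (D x) = D x
    rw [hθD, hx]
  · have hpairs := X_mul_X_mem D hD hA (fun m i => hSA (Or.inl ⟨m, i, rfl⟩))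
      (fun m i j hij => hSA (Or.inr ⟨m, i, j, hij, rfl⟩))
    exact mem_of_map_eq_self_of_map_X_eq_neg (θ : _ →ₐ[ℂ] _) hθ A hpairs hx
end
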